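/- arXiv:2203.08313 — 2 statements merged into one kernel-verified Lean document; each statement's English description precedes it below -/
import Mathlib

section
/- Let n ≥ 1, let k_1, …, k_n be pairwise distinct strictly positive real numbers, let f(u) := (−1)^{n+1} · u · ∏_{i=1}^n (1 − u/k_i), and let y_0 > max_i k_i. If T > 0 and y : (−T, 0] → ℝ is differentiable with y(0) = y_0 and y′(t) = f(y(t)) for all t ∈ (−T, 0], then T ≤ −∑_{i=1}^n [(∏_{j≠i} k_j) / (∏_{j≠i} (k_i − k_j))] · ln(1 − k_i/y_0); i.e., the solution blows up in the past no earlier than this exact finite time before 0, which in particular is smaller than (∏_{i=1}^n k_i)/(n·y_0^n·∏_{i=1}^n(1 − k_i/y_0)). -/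
open Finset

/-!
Let `G(u) = -∑ Bᵢ log (1 - kᵢ / u)`. Partial fractions give `G' = 1 / f` on `(max kᵢ, ∞)`; since
moreover `G' < 0` and `G → 0` at `∞`, `G` is positive there. As `f (y₀) < 0`, a solution cannot
drop below `y₀` going backwards, so `G (y t) - t` is defined and constant, equal to `G (y₀)`. If we
had `T > G (y₀)`, then `t = -G (y₀)` would give `G (y t) = 0`, which is impossible.

For the bound, `-G' (u) = ∏ kᵢ / (u ∏ (u - kᵢ)) < ∏ kᵢ / (u ^ (n + 1) ∏ (1 - kᵢ / y₀))` for
`u > y₀`; the right-hand side is the derivative of `-∏ kᵢ / (n u ^ n ∏ (1 - kᵢ / y₀))`, and comparing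
the two antiderivatives, which both vanish at `∞`, bounds `G (y₀)`.
-/

open Filter Topology Set Function

section Products

variable {ι F : Type*} [Fintype ι] [Field F]

theorem neg_one_pow_mul_prod_one_sub_div {k : ι → F} (hk : ∀ i, k i ≠ 0) (u : F) :
    (-1) ^ (Fintype.card ι + 1) * u * ∏ i, (1 - u / k i) =
      -(u * ∏ i, (u - k i)) / ∏ i, k i := by
  have h : ∏ i, (1 - u / k i) = (-1) ^ Fintype.card ι * (∏ i, (u - k i)) / ∏ i, k i := by
    rw [← card_univ, ← prod_neg, ← prod_div_distrib]
    exact prod_congr rfl fun i _ => by field_simp [hk i]; ring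
  have hsq : ((-1 : F) ^ Fintype.card ι) ^ 2 = 1 := by
    rw [← pow_mul, mul_comm, pow_mul]; simp
  rw [h]
  linear_combination (-(u * ∏ i, (u - k i)) / ∏ i, k i) * hsq

variable [DecidableEq ι]

theorem sum_prod_erase_sub_div_sub_eq_one [Nonempty ι] {k : ι → F} (hinj : Injective k) (u : F) :
    ∑ i, ∏ j ∈ univ.erase i, (u - k j) / (k i - k j) = 1 := by
  have h := congrArg (Polynomial.eval u) (Lagrange.sum_basis hinj.injOn univ_nonempty)
  simpa [Lagrange.basis, Lagrange.basisDivisor, Polynomial.eval_finsetSum,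
    Polynomial.eval_prod, div_eq_inv_mul] using h

/-- The coefficient `Bᵢ` of the paper. -/
def partialFractionCoeff (k : ι → F) (i : ι) : F :=
  (∏ j ∈ univ.erase i, k j) / ∏ j ∈ univ.erase i, (k i - k j)

theorem prod_div_mul_prod_sub_eq_sum [Nonempty ι] {k : ι → F} (hinj : Injective k) {u : F}
    (hu : u ≠ 0) (huk : ∀ i, u ≠ k i) :
    (∏ i, k i) / (u * ∏ i, (u - k i)) =
      ∑ i, partialFractionCoeff k i * (k i / (u * (u - k i))) := by
  have hterm : ∀ i, partialFractionCoeff k i * (k i / (u * (u - k i))) =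
      (∏ i, k i) / (u * ∏ i, (u - k i)) * ∏ j ∈ univ.erase i, (u - k j) / (k i - k j) := by
    intro i
    have hden : ∏ j ∈ univ.erase i, (k i - k j) ≠ 0 :=
      prod_ne_zero_iff.2 fun j hj => sub_ne_zero.2 fun h => (mem_erase.1 hj).1 (hinj h).symm
    have hnum : ∏ j ∈ univ.erase i, (u - k j) ≠ 0 :=
      prod_ne_zero_iff.2 fun j _ => sub_ne_zero.2 (huk j)
    have hki := sub_ne_zero.2 (huk i)
    rw [partialFractionCoeff, ← mul_prod_erase univ k (mem_univ i),
      ← mul_prod_erase univ (fun j => u - k j) (mem_univ i), prod_div_distrib]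
    field_simp
  rw [sum_congr rfl fun i _ => hterm i, ← mul_sum, sum_prod_erase_sub_div_sub_eq_one hinj,
    mul_one]

end Products

theorem hasDerivAt_log_one_sub_div {a u : ℝ} (hu : u ≠ 0) (hua : u ≠ a) :
    HasDerivAt (fun v => Real.log (1 - a / v)) (a / (u * (u - a))) u := by
  have hua' : u - a ≠ 0 := sub_ne_zero.2 hua
  have hne : 1 - a / u ≠ 0 := by
    rw [one_sub_div hu]; exact div_ne_zero hua' hu
  have h := ((hasDerivAt_inv hu).const_mul a |>.const_sub 1).log
    (by simpa [div_eq_mul_inv] using hne)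
  convert h using 1
  · simp [div_eq_mul_inv]
  · field_simp

theorem hasDerivAt_inv_pow {𝕜 : Type*} [NontriviallyNormedField 𝕜] (n : ℕ) {u : 𝕜}
    (hu : u ≠ 0) : HasDerivAt (fun v => (v ^ n)⁻¹) (-(n / u ^ (n + 1))) u := by
  have h := (hasDerivAt_pow n u).fun_inv (pow_ne_zero n hu)
  have e : -(n * u ^ (n - 1)) / (u ^ n) ^ 2 = -(n / u ^ (n + 1)) := by
    rcases n with _ | m
    · simp
    · rw [Nat.add_sub_cancel]
      field_simp
      ring
  rwa [e] at h

theorem pos_of_hasDerivAt_neg_of_tendsto_zero {φ φ' : ℝ → ℝ} {v : ℝ}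
    (hφ : ∀ u ∈ Ici v, HasDerivAt φ (φ' u) u) (hφ' : ∀ u ∈ Ioi v, φ' u < 0)
    (hlim : Tendsto φ atTop (𝓝 0)) : 0 < φ v := by
  have hanti : StrictAntiOn φ (Ici v) := by
    refine strictAntiOn_of_deriv_neg (convex_Ici v)
      (fun u hu => (hφ u hu).continuousAt.continuousWithinAt) fun u hu => ?_
    rw [interior_Ici] at hu
    rw [(hφ u (Ioi_subset_Ici_self hu)).deriv]
    exact hφ' u hu
  have hnonneg : 0 ≤ φ (v + 1) :=
    le_of_tendsto hlim (eventually_ge_atTop (v + 1) |>.mono fun u hu =>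
      hanti.antitoneOn (by simp) (by simp; linarith) hu)
  exact hnonneg.trans_lt (hanti (by simp) (by simp) (by linarith))

/-- Reversing time turns this into the fencing theorem
`image_le_of_deriv_right_lt_deriv_boundary` for `s ↦ -y (-s)`. -/
theorem le_image_of_deriv_neg_boundary {y y' : ℝ → ℝ} {a b c : ℝ}
    (hy : ∀ t ∈ Ioc a b, HasDerivWithinAt y (y' t) (Ioc a b) t) (hb : c ≤ y b)
    (bound : ∀ t ∈ Ioc a b, y t = c → y' t < 0) : ∀ t ∈ Ioc a b, c ≤ y t := by
  intro t ht
  have hsub : ∀ s ∈ Icc (-b) (-t), -s ∈ Ioc a b := fun s hs =>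
    ⟨by linarith [hs.2, ht.1], by linarith [hs.1]⟩
  have hderiv : ∀ s ∈ Ico (-b) (-t),
      HasDerivWithinAt (fun s => -y (-s)) (y' (-s)) (Ici s) s := by
    intro s hs
    obtain ⟨has, hsb⟩ := hsub s (Ico_subset_Icc_self hs)
    have hys := (hy (-s) ⟨has, hsb⟩).mono_of_mem_nhdsWithin <| mem_nhdsWithin.2
      ⟨Ioi a, isOpen_Ioi, has, fun x (hx : x ∈ Ioi a ∩ Iic (-s)) => ⟨hx.1, hx.2.trans hsb⟩⟩
    have h := (hys.comp s (hasDerivAt_neg s).hasDerivWithinAt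
      fun x hx => neg_le_neg (Set.mem_Ici.1 hx)).neg
    rwa [mul_neg_one, neg_neg] at h
  have hcont : ContinuousOn (fun s => -y (-s)) (Icc (-b) (-t)) :=
    fun s hs => ((hy _ (hsub s hs)).continuousWithinAt.comp continuous_neg.continuousWithinAt
      fun x hx => hsub x hx).neg
  have := image_le_of_deriv_right_lt_deriv_boundary hcont hderiv (B := fun _ => -c) (B' := 0)
    (by simpa using hb) (fun _ => hasDerivAt_const _ _)
    (fun s hs h => bound _ (hsub s (Ico_subset_Icc_self hs)) (by simpa using h))
    (right_mem_Icc.2 (by linarith [ht.2]))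
  simpa using this

section BlowUpTime

variable {ι : Type*} [Fintype ι]

theorem pow_mul_prod_one_sub_div_lt_prod_sub [Nonempty ι] {k : ι → ℝ} (hk : ∀ i, 0 < k i)
    {y₀ u : ℝ} (hy₀ : ∀ i, k i < y₀) (hu : y₀ < u) :
    u ^ Fintype.card ι * ∏ i, (1 - k i / y₀) < ∏ i, (u - k i) := by
  have hy₀_pos : 0 < y₀ := (hk (Classical.arbitrary ι)).trans (hy₀ _)
  rw [← card_univ, ← prod_const, ← prod_mul_distrib]
  refine prod_lt_prod_of_nonempty (fun i _ => ?_) (fun i _ => ?_) univ_nonempty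
  · have : k i / y₀ < 1 := (div_lt_one hy₀_pos).2 (hy₀ i)
    nlinarith
  · have : k i < u * k i / y₀ := by
      rw [lt_div_iff₀ hy₀_pos]; nlinarith [hk i]
    linarith [show u * (1 - k i / y₀) = u - u * k i / y₀ by ring]

variable [DecidableEq ι]

/-- The time `ε₁` of the paper, as a function of the initial value. -/
noncomputable def blowUpTime (k : ι → ℝ) (u : ℝ) : ℝ :=
  -∑ i, partialFractionCoeff k i * Real.log (1 - k i / u)

theorem hasDerivAt_blowUpTime [Nonempty ι] {k : ι → ℝ} (hinj : Injective k) {u : ℝ}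
    (hu : u ≠ 0) (huk : ∀ i, u ≠ k i) :
    HasDerivAt (blowUpTime k) (-((∏ i, k i) / (u * ∏ i, (u - k i)))) u := by
  rw [prod_div_mul_prod_sub_eq_sum hinj hu huk]
  exact (HasDerivAt.fun_sum fun i _ =>
    (hasDerivAt_log_one_sub_div hu (huk i)).const_mul (partialFractionCoeff k i)).neg

theorem tendsto_blowUpTime_atTop (k : ι → ℝ) : Tendsto (blowUpTime k) atTop (𝓝 0) := by
  have hlog : ∀ i, Tendsto (fun u => Real.log (1 - k i / u)) atTop (𝓝 0) := fun i => by
    have h : Tendsto (fun u => 1 - k i / u) atTop (𝓝 1) := by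
      simpa using tendsto_const_nhds.sub (tendsto_const_nhds.div_atTop (tendsto_id (α := ℝ)))
    simpa using h.log one_ne_zero
  have h := (tendsto_finsetSum univ fun i _ => (hlog i).const_mul
    (partialFractionCoeff k i)).neg
  rw [← neg_zero]
  simp only [mul_zero, sum_const_zero] at h
  exact h

theorem blowUpTime_pos [Nonempty ι] {k : ι → ℝ} (hinj : Injective k) (hk : ∀ i, 0 < k i)
    {v : ℝ} (hv : ∀ i, k i < v) : 0 < blowUpTime k v := by
  have hlt : ∀ u ∈ Ici v, ∀ i, k i < u := fun u hu i => (hv i).trans_le hu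
  have hpos : ∀ u ∈ Ici v, 0 < u := fun u hu => (hk (Classical.arbitrary ι)).trans (hlt u hu _)
  refine pos_of_hasDerivAt_neg_of_tendsto_zero
    (fun u hu => hasDerivAt_blowUpTime hinj (hpos u hu).ne' fun i => (hlt u hu i).ne')
    (fun u hu => ?_) (tendsto_blowUpTime_atTop k)
  have hu_pos := hpos u (Ioi_subset_Ici_self hu)
  have hprod : 0 < ∏ i, (u - k i) :=
    prod_pos fun i _ => sub_pos.2 (hlt u (Ioi_subset_Ici_self hu) i)
  have hK : 0 < ∏ i, k i := prod_pos fun i _ => hk i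
  rw [neg_lt_zero]
  positivity

variable {k : ι → ℝ} {f : ℝ → ℝ}

theorem blowUpTime_comp_sub_eq [Nonempty ι] (hinj : Injective k) (hk : ∀ i, 0 < k i)
    (hf : ∀ u, f u = -(u * ∏ i, (u - k i)) / ∏ i, k i) {y : ℝ → ℝ} {s : Set ℝ}
    (hs : Convex ℝ s) (hy : ∀ t ∈ s, HasDerivWithinAt y (f (y t)) s t)
    (hy_gt : ∀ t ∈ s, ∀ i, k i < y t) {a b : ℝ} (ha : a ∈ s) (hb : b ∈ s) :
    blowUpTime k (y a) - a = blowUpTime k (y b) - b := by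
  have hderiv : ∀ t ∈ s, HasDerivWithinAt (fun t => blowUpTime k (y t) - t) 0 s t := by
    intro t ht
    have hyt : 0 < y t := (hk (Classical.arbitrary ι)).trans (hy_gt t ht _)
    have hprod : ∏ i, (y t - k i) ≠ 0 :=
      prod_ne_zero_iff.2 fun i _ => (sub_pos.2 (hy_gt t ht i)).ne'
    have hK : ∏ i, k i ≠ 0 := (prod_pos fun i _ => hk i).ne'
    have h := ((hasDerivAt_blowUpTime hinj hyt.ne' fun i => (hy_gt t ht i).ne')
      |>.comp_hasDerivWithinAt t (hy t ht)).sub (hasDerivWithinAt_id t s)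
    have h_one : -((∏ i, k i) / (y t * ∏ i, (y t - k i))) * f (y t) = 1 := by
      rw [hf]; field_simp
    rwa [h_one, sub_self] at h
  have h := hs.norm_image_sub_le_of_norm_hasDerivWithin_le hderiv (C := 0)
    (fun _ _ => by simp) ha hb
  simpa [sub_eq_zero, eq_comm] using h

theorem le_blowUpTime [Nonempty ι] (hinj : Injective k) (hk : ∀ i, 0 < k i)
    (hf : ∀ u, f u = -(u * ∏ i, (u - k i)) / ∏ i, k i) {y₀ T : ℝ} (hy₀ : ∀ i, k i < y₀)
    {y : ℝ → ℝ} (hy0 : y 0 = y₀)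
    (hy : ∀ t ∈ Ioc (-T) 0, HasDerivWithinAt y (f (y t)) (Ioc (-T) 0) t) :
    T ≤ blowUpTime k y₀ := by
  have hf_neg : f y₀ < 0 := by
    have : 0 < y₀ := (hk (Classical.arbitrary ι)).trans (hy₀ _)
    have : 0 < ∏ i, (y₀ - k i) := prod_pos fun i _ => sub_pos.2 (hy₀ i)
    have : 0 < ∏ i, k i := prod_pos fun i _ => hk i
    rw [hf, neg_div, neg_lt_zero]
    positivity
  have hy_ge : ∀ t ∈ Ioc (-T) 0, y₀ ≤ y t :=
    le_image_of_deriv_neg_boundary hy hy0.ge fun t _ h => h ▸ hf_neg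
  have hy_gt : ∀ t ∈ Ioc (-T) 0, ∀ i, k i < y t := fun t ht i => (hy₀ i).trans_le (hy_ge t ht)
  by_contra! hT
  have hG := blowUpTime_pos hinj hk hy₀
  have ht : -blowUpTime k y₀ ∈ Ioc (-T) 0 := ⟨neg_lt_neg hT, by linarith⟩
  have hconserved := blowUpTime_comp_sub_eq hinj hk hf (convex_Ioc (-T) 0) hy hy_gt ht
    (right_mem_Ioc.2 (ht.1.trans_le ht.2))
  rw [hy0, sub_zero] at hconserved
  linarith [blowUpTime_pos hinj hk (hy_gt _ ht)]

theorem blowUpTime_lt [Nonempty ι] (hinj : Injective k) (hk : ∀ i, 0 < k i) {y₀ : ℝ}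
    (hy₀ : ∀ i, k i < y₀) :
    blowUpTime k y₀ < (∏ i, k i) /
      (Fintype.card ι * y₀ ^ Fintype.card ι * ∏ i, (1 - k i / y₀)) := by
  set n := Fintype.card ι
  set Q := ∏ i, (1 - k i / y₀)
  set K := ∏ i, k i
  have hy₀_pos : 0 < y₀ := (hk (Classical.arbitrary ι)).trans (hy₀ _)
  have hn : (0 : ℝ) < n := Nat.cast_pos.2 Fintype.card_pos
  have hK : 0 < K := prod_pos fun i _ => hk i
  have hQ : 0 < Q := prod_pos fun i _ => sub_pos.2 ((div_lt_one hy₀_pos).2 (hy₀ i))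
  have hgap := pos_of_hasDerivAt_neg_of_tendsto_zero
    (φ := fun u => K / (n * Q) * (u ^ n)⁻¹ - blowUpTime k u)
    (φ' := fun u => K / (n * Q) * -(n / u ^ (n + 1)) - -(K / (u * ∏ i, (u - k i)))) (v := y₀)
    (fun u hu => ?_) (fun u hu => ?_) ?_
  · have : K / (n * Q) * (y₀ ^ n)⁻¹ = K / (n * y₀ ^ n * Q) := by
      field_simp
    linarith
  · have hu0 : u ≠ 0 := (hy₀_pos.trans_le hu).ne'
    exact ((hasDerivAt_inv_pow n hu0).const_mul _).sub
      (hasDerivAt_blowUpTime hinj hu0 fun i => ((hy₀ i).trans_le hu).ne')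
  · have hu0 : 0 < u := hy₀_pos.trans hu
    have hlt := pow_mul_prod_one_sub_div_lt_prod_sub hk hy₀ hu
    have : K / (n * Q) * -(n / u ^ (n + 1)) = -(K / (u * (u ^ n * Q))) := by
      field_simp
      ring
    simp only [this, sub_neg_eq_add, neg_add_lt_iff_lt_add, add_zero]
    gcongr
  · simpa using ((tendsto_pow_atTop Fintype.card_ne_zero).inv_tendsto_atTop.const_mul _).sub
      (tendsto_blowUpTime_atTop k)

end BlowUpTime

theorem blow_up_backward_general (n : ℕ) (hn : 1 ≤ n)
    (k : Fin n → ℝ) (hk : ∀ i, 0 < k i) (hinj : Function.Injective k)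
    (f : ℝ → ℝ) (hf : ∀ u, f u = (-1 : ℝ) ^ (n + 1) * u * ∏ i, (1 - u / k i))
    (y₀ : ℝ) (hy₀ : ∀ i, k i < y₀) (T : ℝ)
    (y : ℝ → ℝ) (hy0 : y 0 = y₀)
    (hy : ∀ t ∈ Set.Ioc (-T) 0, HasDerivWithinAt y (f (y t)) (Set.Ioc (-T) 0) t) :
    T ≤ -∑ i, ((∏ j ∈ Finset.univ.erase i, k j) / (∏ j ∈ Finset.univ.erase i, (k i - k j))) *
          Real.log (1 - k i / y₀) ∧
    -∑ i, ((∏ j ∈ Finset.univ.erase i, k j) / (∏ j ∈ Finset.univ.erase i, (k i - k j))) *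
          Real.log (1 - k i / y₀) <
      (∏ i, k i) / (n * y₀ ^ n * ∏ i, (1 - k i / y₀)) := by
  have : Nonempty (Fin n) := ⟨⟨0, hn⟩⟩
  have hf' : ∀ u, f u = -(u * ∏ i, (u - k i)) / ∏ i, k i := fun u => by
    rw [hf, ← neg_one_pow_mul_prod_one_sub_div (fun i => (hk i).ne'), Fintype.card_fin]
  have hbound := blowUpTime_lt hinj hk hy₀
  rw [Fintype.card_fin] at hbound
  exact ⟨le_blowUpTime hinj hk hf' hy₀ hy0 hy, hbound⟩

theorem blow_up_backward (n : ℕ) (hn : 1 ≤ n)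
    (k : Fin n → ℝ) (hk : ∀ i, 0 < k i) (hinj : Function.Injective k)
    (f : ℝ → ℝ) (hf : ∀ u, f u = (-1 : ℝ) ^ (n + 1) * u * ∏ i, (1 - u / k i))
    (y₀ : ℝ) (hy₀ : ∀ i, k i < y₀) (T : ℝ) (hT : 0 < T)
    (y : ℝ → ℝ) (hy0 : y 0 = y₀)
    (hy : ∀ t ∈ Set.Ioc (-T) 0, HasDerivWithinAt y (f (y t)) (Set.Ioc (-T) 0) t) :
    T ≤ -∑ i, ((∏ j ∈ Finset.univ.erase i, k j) / (∏ j ∈ Finset.univ.erase i, (k i - k j))) *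
          Real.log (1 - k i / y₀) ∧
    -∑ i, ((∏ j ∈ Finset.univ.erase i, k j) / (∏ j ∈ Finset.univ.erase i, (k i - k j))) *
          Real.log (1 - k i / y₀) <
      (∏ i, k i) / (n * y₀ ^ n * ∏ i, (1 - k i / y₀)) :=
  blow_up_backward_general n hn k hk hinj f hf y₀ hy₀ T y hy0 hy
end

section
/- Let n ≥ 1, let x_1, …, x_n be pairwise distinct non-negative real numbers, and let r_1, …, r_n be strictly positive natural numbers, such that the real numbers j·x_i for i ∈ {1,…,n}, j ∈ {1,…,r_i} are pairwise distinct. Set m := ∑_{i=1}^n r_i and, for each i and each j ∈ {1,…,r_i}, a_{ij} := [(∏_{ℓ=1, ℓ≠j}^{r_i} ℓ) · ∏_{k≠i} (r_k! · x_k^{r_k})] / [(∏_{ℓ=1, ℓ≠j}^{r_i} (ℓ − j)) · ∏_{k≠i} ∏_{ℓ=1}^{r_k} (ℓ·x_k − j·x_i)]. Then ∏_{i=1}^n ∏_{j=1}^{r_i} (1 + j·x_i)^{a_{ij}} ≤ exp((1/m) · ∏_{i=1}^n (r_i! · x_i^{r_i})). -/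
/-! Write `v_(i, j) = j * x i` for the `m` pairs `(i, j)`. The exponents of the theorem are then the
exponents `a_p = ∏_{q ≠ p} v_q / ∏_{q ≠ p} (v_q - v_p)` of the basic inequality for these nodes,
after cancelling the common power of `x i`. For the basic inequality,
`log (1 + v) = v * ∫₀¹ dt / (1 + t v)`, and partial fractions turn `∑ a_p log (1 + v_p)` into
`P * ∫₀¹ t ^ (m - 1) / ∏ (1 + t v_q) dt ≤ P * ∫₀¹ t ^ (m - 1) dt = P / m`, where `P = ∏ v_q`. -/

open Finset Real

namespace Lagrange

theorem sum_nodalWeight_mul_inv_sub {F ι : Type*} [Field F] [DecidableEq ι] {s : Finset ι}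
    {v : ι → F} {x : F} (hvs : Set.InjOn v s) (hs : s.Nonempty) (hx : ∀ i ∈ s, x ≠ v i) :
    ∑ i ∈ s, nodalWeight s v i * (x - v i)⁻¹ = (∏ i ∈ s, (x - v i))⁻¹ := by
  have h := congrArg (Polynomial.eval x) (sum_basis hvs hs)
  rw [Polynomial.eval_finsetSum, Polynomial.eval_one,
    sum_congr rfl fun i hi => eval_basis_not_at_node hi (hx i hi), ← mul_sum, eval_nodal] at h
  exact eq_inv_of_mul_eq_one_right h

end Lagrange

-- Partial fractions for the nodes `-v i`, evaluated at `t⁻¹`.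
theorem sum_inv_one_add_mul_mul_prod_erase_sub {K ι : Type*} [Field K] [DecidableEq ι]
    {s : Finset ι} {v : ι → K} (hvs : Set.InjOn v s) (hs : s.Nonempty) {t : K} (ht : t ≠ 0)
    (htv : ∀ i ∈ s, 1 + t * v i ≠ 0) :
    ∑ i ∈ s, ((1 + t * v i) * ∏ j ∈ s.erase i, (v j - v i))⁻¹
      = t ^ (#s - 1) / ∏ i ∈ s, (1 + t * v i) := by
  have hfac : ∀ i, t⁻¹ - -v i = t⁻¹ * (1 + t * v i) := fun i => by field_simp; ring
  have hx : ∀ i ∈ s, t⁻¹ ≠ -v i := fun i hi h => by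
    rw [← sub_eq_zero, hfac] at h
    exact mul_ne_zero (inv_ne_zero ht) (htv i hi) h
  have h := Lagrange.sum_nodalWeight_mul_inv_sub (v := fun i => -v i)
    (fun i hi j hj h => hvs hi hj (neg_inj.mp h)) hs hx
  simp only [hfac, Lagrange.nodalWeight, neg_sub_neg, prod_mul_distrib, prod_const,
    ← prod_inv_distrib, mul_inv, inv_inv, inv_pow] at h
  rw [← mul_right_inj' ht, mul_sum, mul_div_assoc', mul_pow_sub_one hs.card_pos.ne',
    div_eq_mul_inv, ← prod_inv_distrib, ← h]
  refine sum_congr rfl fun i _ => ?_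
  rw [mul_inv, prod_inv_distrib]
  ring

theorem Real.log_one_add_eq_mul_integral {y : ℝ} (hy : -1 < y) :
    log (1 + y) = y * ∫ t in (0 : ℝ)..1, (1 + t * y)⁻¹ := by
  rcases eq_or_ne y 0 with rfl | hy0
  · simp
  have h := intervalIntegral.integral_comp_mul_add (a := 0) (b := 1) (fun u : ℝ => u⁻¹) hy0 1
  simp only [mul_zero, zero_add, mul_one, smul_eq_mul] at h
  rw [integral_inv_of_pos one_pos (by linarith), div_one] at h
  simp_rw [mul_comm _ y, add_comm 1 (y * _), h, add_comm y 1]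
  field_simp

section BasicInequality

variable {ι : Type*} [DecidableEq ι]

noncomputable def basicExponent (s : Finset ι) (v : ι → ℝ) (i : ι) : ℝ :=
  (∏ j ∈ s.erase i, v j) / ∏ j ∈ s.erase i, (v j - v i)

theorem basicExponent_mul_self {s : Finset ι} {i : ι} (hi : i ∈ s) (v : ι → ℝ) :
    basicExponent s v i * v i = (∏ j ∈ s, v j) / ∏ j ∈ s.erase i, (v j - v i) := by
  rw [basicExponent, div_mul_eq_mul_div, prod_erase_mul s v hi]

theorem sum_basicExponent_mul_log_le {s : Finset ι} {v : ι → ℝ} (hv : ∀ i ∈ s, 0 ≤ v i)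
    (hvs : Set.InjOn v s) :
    ∑ i ∈ s, basicExponent s v i * log (1 + v i) ≤ (#s : ℝ)⁻¹ * ∏ i ∈ s, v i := by
  rcases s.eq_empty_or_nonempty with rfl | hs
  · simp
  set P := ∏ i ∈ s, v i
  have hpos : ∀ i ∈ s, ∀ t : ℝ, 0 ≤ t → 0 < 1 + t * v i := fun i hi t ht => by
    nlinarith [hv i hi]
  let f (i : ι) (t : ℝ) : ℝ := P * ((1 + t * v i) * ∏ j ∈ s.erase i, (v j - v i))⁻¹
  have hf : ∀ i ∈ s, ContinuousOn (f i) (Set.uIcc 0 1) := fun i hi => by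
    have hD : ∏ j ∈ s.erase i, (v j - v i) ≠ 0 := prod_ne_zero_iff.mpr fun j hj =>
      sub_ne_zero.mpr fun h => (mem_erase.mp hj).1 (hvs (mem_of_mem_erase hj) hi h)
    refine continuousOn_const.mul <| ContinuousOn.inv₀ (by fun_prop) fun t ht => ?_
    rw [Set.uIcc_of_le zero_le_one] at ht
    exact mul_ne_zero (hpos i hi t ht.1).ne' hD
  have hterm : ∀ i ∈ s, basicExponent s v i * log (1 + v i) = ∫ t in (0 : ℝ)..1, f i t := by
    intro i hi
    rw [log_one_add_eq_mul_integral (by linarith [hv i hi]), ← mul_assoc,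
      basicExponent_mul_self hi, ← intervalIntegral.integral_const_mul]
    congr 1 with t
    simp only [f, mul_inv]
    ring
  have hbound : ∀ t ∈ Set.Ioo (0 : ℝ) 1, ∑ i ∈ s, f i t ≤ P * t ^ (#s - 1) := by
    intro t ht
    rw [← mul_sum, sum_inv_one_add_mul_mul_prod_erase_sub hvs hs ht.1.ne'
      fun i hi => (hpos i hi t ht.1.le).ne']
    gcongr
    · exact prod_nonneg hv
    · exact div_le_self (pow_nonneg ht.1.le _) <|
        one_le_prod fun i hi => by nlinarith [hv i hi, ht.1]
  calc ∑ i ∈ s, basicExponent s v i * log (1 + v i)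
      = ∫ t in (0 : ℝ)..1, ∑ i ∈ s, f i t := by
        rw [sum_congr rfl hterm, intervalIntegral.integral_finsetSum
          fun i hi => (hf i hi).intervalIntegrable]
    _ ≤ ∫ t in (0 : ℝ)..1, P * t ^ (#s - 1) :=
        intervalIntegral.integral_mono_on_of_le_Ioo zero_le_one
          (continuousOn_finsetSum s hf).intervalIntegrable
          ((by fun_prop : Continuous fun t : ℝ => P * t ^ (#s - 1)).intervalIntegrable _ _) hbound
    _ = (#s : ℝ)⁻¹ * P := by
        rw [intervalIntegral.integral_const_mul, integral_pow, Nat.sub_add_cancel hs.card_pos,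
          Nat.cast_sub hs.card_pos, zero_pow hs.card_pos.ne']
        simp only [one_pow, sub_zero, Nat.cast_one, sub_add_cancel, one_div]
        ring

theorem prod_one_add_rpow_basicExponent_le_exp {s : Finset ι} {v : ι → ℝ}
    (hv : ∀ i ∈ s, 0 ≤ v i) (hvs : Set.InjOn v s) :
    ∏ i ∈ s, (1 + v i) ^ basicExponent s v i ≤ exp ((#s : ℝ)⁻¹ * ∏ i ∈ s, v i) := by
  calc ∏ i ∈ s, (1 + v i) ^ basicExponent s v i
      = exp (∑ i ∈ s, basicExponent s v i * log (1 + v i)) := by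
        rw [exp_sum]
        refine prod_congr rfl fun i hi => ?_
        rw [rpow_def_of_pos (by linarith [hv i hi]), mul_comm]
    _ ≤ exp ((#s : ℝ)⁻¹ * ∏ i ∈ s, v i) := exp_le_exp.mpr (sum_basicExponent_mul_log_le hv hvs)

end BasicInequality

theorem Finset.prod_sigma_erase {ι M : Type*} [DecidableEq ι] [CommMonoid M] {κ : ι → Type*}
    [∀ i, DecidableEq (κ i)] {s : Finset ι} (t : ∀ i, Finset (κ i)) (f : (Σ i, κ i) → M)
    {i : ι} (hi : i ∈ s) (j : κ i) :
    ∏ q ∈ (s.sigma t).erase ⟨i, j⟩, f q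
      = (∏ ℓ ∈ (t i).erase j, f ⟨i, ℓ⟩) * ∏ k ∈ s.erase i, ∏ ℓ ∈ t k, f ⟨k, ℓ⟩ := by
  have hset : (s.sigma t).erase ⟨i, j⟩ = s.sigma (Function.update t i ((t i).erase j)) := by
    ext ⟨k, ℓ⟩
    rcases eq_or_ne k i with rfl | hk
    · simp [and_left_comm]
    · simp [hk]
  rw [hset, prod_sigma, ← mul_prod_erase s _ hi, Function.update_self]
  congr 1
  exact prod_congr rfl fun k hk => by rw [Function.update_of_ne (mem_erase.mp hk).1]

theorem prod_Icc_natCast_mul (m : ℕ) (y : ℝ) :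
    ∏ ℓ ∈ Icc 1 m, ((ℓ : ℝ) * y) = (m.factorial : ℝ) * y ^ m := by
  rw [prod_mul_distrib, prod_const, Nat.card_Icc, Nat.add_sub_cancel, ← Nat.cast_prod,
    ← Ico_add_one_right_eq_Icc, prod_Ico_id_eq_factorial]

theorem basicExponent_sigma_Icc {ι : Type*} [Fintype ι] [DecidableEq ι] (x : ι → ℝ) (r : ι → ℕ)
    {i : ι} {j : ℕ} (hj : j ∈ Icc 1 (r i)) (hxr : x i = 0 → r i ≤ 1) :
    basicExponent (univ.sigma fun i => Icc 1 (r i)) (fun p => (p.2 : ℝ) * x p.1) ⟨i, j⟩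
      = ((∏ ℓ ∈ (Icc 1 (r i)).erase j, (ℓ : ℝ)) *
            ∏ p ∈ univ.erase i, (((r p).factorial : ℝ) * x p ^ r p)) /
          ((∏ ℓ ∈ (Icc 1 (r i)).erase j, ((ℓ : ℝ) - j)) *
            ∏ p ∈ univ.erase i, ∏ ℓ ∈ Icc 1 (r p), ((ℓ : ℝ) * x p - j * x i)) := by
  have hpow : x i ^ #((Icc 1 (r i)).erase j) ≠ 0 := by
    rcases eq_or_ne (x i) 0 with h | h
    · have := hxr h
      rw [card_erase_of_mem hj, Nat.card_Icc, show r i + 1 - 1 - 1 = 0 by omega, pow_zero]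
      exact one_ne_zero
    · exact pow_ne_zero _ h
  have hnum : ∏ ℓ ∈ (Icc 1 (r i)).erase j, ((ℓ : ℝ) * x i)
      = (∏ ℓ ∈ (Icc 1 (r i)).erase j, (ℓ : ℝ)) * x i ^ #((Icc 1 (r i)).erase j) := by
    rw [prod_mul_distrib, prod_const]
  have hden : ∏ ℓ ∈ (Icc 1 (r i)).erase j, ((ℓ : ℝ) * x i - j * x i)
      = (∏ ℓ ∈ (Icc 1 (r i)).erase j, ((ℓ : ℝ) - j)) * x i ^ #((Icc 1 (r i)).erase j) := by
    simp_rw [← sub_mul]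
    rw [prod_mul_distrib, prod_const]
  rw [basicExponent, prod_sigma_erase _ _ (mem_univ i), prod_sigma_erase _ _ (mem_univ i)]
  simp only [hnum, hden, prod_Icc_natCast_mul]
  rw [mul_right_comm, mul_right_comm _ (x i ^ _), mul_div_mul_right _ _ hpow]

theorem multivariate_basic_inequality_with_repetitions_general (n : ℕ)
    (x : Fin n → ℝ) (hx : ∀ i, 0 ≤ x i)
    (r : Fin n → ℕ)
    (hdist : ∀ i i' : Fin n, ∀ j ∈ Finset.Icc 1 (r i), ∀ j' ∈ Finset.Icc 1 (r i'),
      (i, j) ≠ (i', j') → (j : ℝ) * x i ≠ (j' : ℝ) * x i') :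
    ∏ i, ∏ j ∈ Finset.Icc 1 (r i),
        (1 + (j : ℝ) * x i) ^
          (((∏ ℓ ∈ (Finset.Icc 1 (r i)).erase j, (ℓ : ℝ)) *
              ∏ p ∈ Finset.univ.erase i, (((r p).factorial : ℝ) * x p ^ (r p))) /
            ((∏ ℓ ∈ (Finset.Icc 1 (r i)).erase j, ((ℓ : ℝ) - (j : ℝ))) *
              ∏ p ∈ Finset.univ.erase i, ∏ ℓ ∈ Finset.Icc 1 (r p),
                ((ℓ : ℝ) * x p - (j : ℝ) * x i))) ≤
      Real.exp ((1 / (∑ i, r i : ℝ)) * ∏ i, (((r i).factorial : ℝ) * x i ^ (r i))) := by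
  set s := univ.sigma fun i => Icc 1 (r i)
  set v : (Σ _ : Fin n, ℕ) → ℝ := fun p => (p.2 : ℝ) * x p.1
  have hvs : Set.InjOn v s := by
    rintro ⟨i, j⟩ hp ⟨i', j'⟩ hq h
    by_contra hne
    exact hdist i i' j (mem_sigma.mp hp).2 j' (mem_sigma.mp hq).2 (by simpa using hne) h
  have hxr : ∀ i, x i = 0 → r i ≤ 1 := fun i h => by
    by_contra! hr
    exact hdist i i 1 (by simp; omega) 2 (by simp; omega) (by simp) (by simp [h])
  have key := prod_one_add_rpow_basicExponent_le_exp (s := s) (v := v)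
    (fun p _ => mul_nonneg p.2.cast_nonneg (hx p.1)) hvs
  rw [prod_sigma, card_sigma, prod_sigma] at key
  refine Eq.trans_le (prod_congr rfl fun i _ => prod_congr rfl fun j hj => ?_) (key.trans_eq ?_)
  · rw [basicExponent_sigma_Icc x r hj (hxr i)]
  · simp only [v, prod_Icc_natCast_mul, Nat.card_Icc, Nat.add_sub_cancel, one_div, Nat.cast_sum]

theorem multivariate_basic_inequality_with_repetitions (n : ℕ) (hn : 1 ≤ n)
    (x : Fin n → ℝ) (hx : ∀ i, 0 ≤ x i) (hinj : Function.Injective x)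
    (r : Fin n → ℕ) (hr : ∀ i, 0 < r i)
    (hdist : ∀ i i' : Fin n, ∀ j ∈ Finset.Icc 1 (r i), ∀ j' ∈ Finset.Icc 1 (r i'),
      (i, j) ≠ (i', j') → (j : ℝ) * x i ≠ (j' : ℝ) * x i') :
    ∏ i, ∏ j ∈ Finset.Icc 1 (r i),
        (1 + (j : ℝ) * x i) ^
          (((∏ ℓ ∈ (Finset.Icc 1 (r i)).erase j, (ℓ : ℝ)) *
              ∏ p ∈ Finset.univ.erase i, (((r p).factorial : ℝ) * x p ^ (r p))) /
            ((∏ ℓ ∈ (Finset.Icc 1 (r i)).erase j, ((ℓ : ℝ) - (j : ℝ))) *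
              ∏ p ∈ Finset.univ.erase i, ∏ ℓ ∈ Finset.Icc 1 (r p),
                ((ℓ : ℝ) * x p - (j : ℝ) * x i))) ≤
      Real.exp ((1 / (∑ i, r i : ℝ)) * ∏ i, (((r i).factorial : ℝ) * x i ^ (r i))) :=
  multivariate_basic_inequality_with_repetitions_general n x hx r hdist
end
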